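/- Suppose $m \ge d+2$ or $n \ge d+2$. If a subset $\mathcal{C}$ of the grid $\{1,\dots,n\}\times\{1,\dots,m\}$ satisfies $|\mathcal{C}| > \max\{f(k) : 1 \le k \le d+1\}$ with $f(x) = x^2+(m-n-d-2)x+(n+1)(d+1)-m$, then (after a suitable permutation of rows and of entries within rows turning a superset structure into a tableau) $\mathcal{C}$ contains at least two distinct effective sets. -/

import Mathlib

/-- A subset `Q` of the `n × m` grid is *effective* if there are `d+1` distinct rows
`q 0, …, q d` such that `Q` meets row `q ν` in exactly `ν+1` points and meets no
other row. -/
def IsEffective (n m d : ℕ) (Q : Finset (Fin n × Fin m)) : Prop :=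
  ∃ q : Fin (d + 1) → Fin n, Function.Injective q ∧
    (∀ ν : Fin (d + 1), (Q.filter (fun p => p.1 = q ν)).card = ν.1 + 1) ∧
    (∀ p ∈ Q, ∃ ν, p.1 = q ν)

/-- The quadratic `f(x) = x² + (m-n-d-2)x + (n+1)(d+1) - m`. -/
def fQ (n m d : ℕ) (x : ℤ) : ℤ :=
  x ^ 2 + ((m : ℤ) - n - d - 2) * x + ((n : ℤ) + 1) * ((d : ℤ) + 1) - m

/-- `max { f(k) : 1 ≤ k ≤ d+1 }`. -/
def maxF (n m d : ℕ) : ℤ :=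
  (Finset.Icc 1 (d + 1)).sup' (Finset.nonempty_Icc.mpr (by omega))
    (fun k : ℕ => fQ n m d (k : ℤ))

/-! If fewer than `k` rows of `C` carried more than `d + 1 - k` points, `C` would have at
most `(k - 1) m + (n - k + 1) (d + 1 - k) = f(k)` points. Hence for every `ν ≤ d` at least
`d + 1 - ν` rows carry more than `ν` points, and a greedy choice gives distinct rows `q ν`
carrying more than `ν` points each, so `C` contains an effective set `Q`. Since `f(1) = n d` and
`f(d + 1) = m d`, `|Q| = (d + 1)(d + 2)/2 ≤ d (d + 2) < |C|`, and exchanging a point of `C \ Q`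
for a suitable point of `Q` permutes the row counts, giving a second effective set. -/

open Finset

def rowCount {α β : Type*} [DecidableEq α] (Q : Finset (α × β)) (i : α) : ℕ :=
  #{p ∈ Q | p.1 = i}

section Rows

variable {α β : Type*} [DecidableEq α]

lemma rowCount_le_card [Fintype β] (Q : Finset (α × β)) (i : α) :
    rowCount Q i ≤ Fintype.card β :=
  calc rowCount Q i ≤ #({i} ×ˢ (univ : Finset β)) :=
        card_le_card fun p hp => mem_product.2 ⟨mem_singleton.2 (mem_filter.1 hp).2, mem_univ _⟩
    _ = Fintype.card β := by simp

lemma card_le_of_rowCount [Fintype α] [Fintype β] (Q : Finset (α × β)) (t : ℕ) :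
    #Q ≤ #{i | t < rowCount Q i} * Fintype.card β + #{i | ¬ t < rowCount Q i} * t := by
  rw [card_eq_sum_card_fiberwise (f := Prod.fst) (t := univ) fun p _ => mem_coe.2 (mem_univ _),
    ← sum_filter_add_sum_filter_not univ fun i => t < rowCount Q i]
  exact add_le_add (sum_le_card_nsmul _ _ _ fun i _ => rowCount_le_card Q i)
    (sum_le_card_nsmul _ _ _ fun i hi => not_lt.1 (mem_filter.1 hi).2)

lemma rowCount_insert_erase_add [DecidableEq β] {Q : Finset (α × β)} {p x : α × β}
    (hp : p ∉ Q) (hx : x ∈ Q) (i : α) :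
    rowCount (insert p (Q.erase x)) i + (if x.1 = i then 1 else 0) =
      rowCount Q i + (if p.1 = i then 1 else 0) := by
  have hp' : p ∉ {y ∈ Q | y.1 = i}.erase x := fun h => hp (mem_filter.1 (mem_of_mem_erase h)).1
  have herase :
      #({y ∈ Q | y.1 = i}.erase x) + (if x.1 = i then 1 else 0) = #{y ∈ Q | y.1 = i} := by
    split_ifs with hxi
    · exact card_erase_add_one (mem_filter.2 ⟨hx, hxi⟩)
    · rw [add_zero]
      exact congrArg card (erase_eq_of_notMem fun h => hxi (mem_filter.1 h).2)
  unfold rowCount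
  rw [filter_insert, filter_erase, ← herase]
  by_cases hpi : p.1 = i
  · rw [if_pos hpi, if_pos hpi, card_insert_of_notMem hp']
    omega
  · rw [if_neg hpi, if_neg hpi]
    omega

lemma rowCount_insert_erase [DecidableEq β] {Q : Finset (α × β)} {p x : α × β}
    (hp : p ∉ Q) (hx : x ∈ Q) (h : x.1 ≠ p.1 → rowCount Q x.1 = rowCount Q p.1 + 1)
    (i : α) :
    rowCount (insert p (Q.erase x)) i = rowCount Q (Equiv.swap x.1 p.1 i) := by
  have key := rowCount_insert_erase_add hp hx i
  by_cases hxp : x.1 = p.1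
  · rw [hxp, Equiv.swap_self, Equiv.refl_apply]
    simpa [hxp] using key
  · have hcount := h hxp
    rcases eq_or_ne i x.1 with rfl | hix
    · simp only [Equiv.swap_apply_left, if_pos, Ne.symm hxp, if_false] at key ⊢
      omega
    rcases eq_or_ne i p.1 with rfl | hip
    · simp only [Equiv.swap_apply_right, hxp, if_pos, if_false] at key ⊢
      omega
    · rw [Equiv.swap_apply_of_ne_of_ne hix hip]
      simpa [Ne.symm hix, Ne.symm hip] using key

end Rows

/-- A greedy choice from the top: `q 0` is any unused index with `c > 0`, and the remaining
indices come from the induction hypothesis applied to `c - 1`. -/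
lemma exists_injective_lt_of_le_card_filter {ι : Type*} [Fintype ι] [DecidableEq ι]
    (N : ℕ) (c : ι → ℕ) (hc : ∀ ν < N, N - ν ≤ #{i | ν < c i}) :
    ∃ q : Fin N → ι, Function.Injective q ∧ ∀ ν : Fin N, (ν : ℕ) < c (q ν) := by
  induction N generalizing c with
  | zero => exact ⟨Fin.elim0, fun a => a.elim0, fun a => a.elim0⟩
  | succ N ih =>
    obtain ⟨q, hq, hqc⟩ := ih (fun i => c i - 1) fun ν hν => by
      have := hc (ν + 1) (by omega)
      rw [filter_congr fun i _ => show ν < c i - 1 ↔ ν + 1 < c i by omega]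
      omega
    have himage : #(univ.image q) < #{i | 0 < c i} := by
      rw [card_image_of_injective _ hq, card_univ, Fintype.card_fin]
      have := hc 0 (by omega)
      omega
    obtain ⟨r, hr, hrq⟩ := exists_mem_notMem_of_card_lt_card himage
    refine ⟨Fin.cons r q, Fin.cons_injective_iff.2 ⟨?_, hq⟩, Fin.cases ?_ fun ν => ?_⟩
    · rintro ⟨ν, rfl⟩
      exact hrq (mem_image_of_mem q (mem_univ ν))
    · simpa using hr
    · have := hqc ν
      simp only [Fin.cons_succ, Fin.val_succ]
      omega

section Grid

variable {n m d : ℕ}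

lemma fQ_eq (n m d : ℕ) (k : ℤ) :
    fQ n m d k = (k - 1) * m + (n - (k - 1)) * (d + 1 - k) := by
  unfold fQ
  ring

lemma fQ_le_maxF {k : ℕ} (h1 : 1 ≤ k) (h2 : k ≤ d + 1) : fQ n m d k ≤ maxF n m d :=
  le_sup' (fun k : ℕ => fQ n m d k) (mem_Icc.2 ⟨h1, h2⟩)

lemma mul_lt_card_of_maxF_lt {C : Finset (Fin n × Fin m)} (hC : maxF n m d < #C) :
    n * d < #C ∧ m * d < #C := by
  have h1 := fQ_le_maxF (n := n) (m := m) (d := d) (k := 1) le_rfl (by omega)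
  have h2 := fQ_le_maxF (n := n) (m := m) (d := d) (k := d + 1) (by omega) le_rfl
  rw [fQ_eq] at h1 h2
  push_cast at h1 h2
  ring_nf at h1 h2
  constructor <;> zify <;> linarith

lemma le_card_rowCount_gt {C : Finset (Fin n × Fin m)} (hm : d ≤ m) (hC : maxF n m d < #C)
    {ν : ℕ} (hν : ν ≤ d) : d + 1 - ν ≤ #{i | ν < rowCount C i} := by
  by_contra! hlt
  have hsplit := card_filter_add_card_filter_not (s := univ) fun i => ν < rowCount C i
  have hcard := card_le_of_rowCount C ν
  have hf := fQ_le_maxF (n := n) (m := m) (d := d) (k := d + 1 - ν) (by omega) (by omega)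
  rw [fQ_eq, Nat.cast_sub (by omega)] at hf
  simp only [card_univ, Fintype.card_fin] at hsplit hcard
  have hs : (#{i | ν < rowCount C i} : ℤ) ≤ d - ν := by omega
  have hsn : (#{i | ¬ ν < rowCount C i} : ℤ) = n - #{i | ν < rowCount C i} := by omega
  have hC' : (#C : ℤ) ≤ #{i | ν < rowCount C i} * m + #{i | ¬ ν < rowCount C i} * ν := by
    exact_mod_cast hcard
  push_cast at hf
  rw [hsn] at hC'
  nlinarith [mul_nonneg (sub_nonneg.2 hs) (sub_nonneg.2 (show (ν : ℤ) ≤ m by omega))]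

lemma exists_isEffective_subset {C : Finset (Fin n × Fin m)} {q : Fin (d + 1) → Fin n}
    (hq : Function.Injective q) (hC : ∀ ν : Fin (d + 1), (ν : ℕ) < rowCount C (q ν)) :
    ∃ Q ⊆ C, IsEffective n m d Q := by
  choose T hTC hT using fun ν => exists_subset_card_eq (hC ν)
  have hrow : ∀ ν, ∀ p ∈ T ν, p.1 = q ν := fun ν p hp => (mem_filter.1 (hTC ν hp)).2
  have hrowT : ∀ ν, {p ∈ univ.biUnion T | p.1 = q ν} = T ν := by
    intro ν
    ext p
    simp only [mem_filter, mem_biUnion, mem_univ, true_and]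
    constructor
    · rintro ⟨⟨μ, hμ⟩, hp⟩
      rwa [← hq ((hrow μ p hμ).symm.trans hp)]
    · exact fun hp => ⟨⟨ν, hp⟩, hrow ν p hp⟩
  refine ⟨univ.biUnion T, biUnion_subset.2 fun ν _ => (hTC ν).trans (filter_subset _ _),
    q, hq, fun ν => by rw [hrowT, hT], fun p hp => ?_⟩
  obtain ⟨ν, -, hν⟩ := mem_biUnion.1 hp
  exact ⟨ν, hrow ν p hν⟩

lemma IsEffective.card_mul_two {Q : Finset (Fin n × Fin m)} (hQ : IsEffective n m d Q) :
    #Q * 2 = (d + 1) * (d + 2) := by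
  obtain ⟨q, hq, hcard, hrows⟩ := hQ
  have hsum : #Q = ∑ ν : Fin (d + 1), (ν + 1 : ℕ) := by
    rw [card_eq_sum_card_fiberwise (f := Prod.fst) (t := univ.map ⟨q, hq⟩), sum_map]
    · exact sum_congr rfl fun ν _ => hcard ν
    · intro p hp
      obtain ⟨ν, hν⟩ := hrows p hp
      simp [hν]
  rw [hsum, Fin.sum_univ_eq_sum_range (fun i => i + 1), ← add_zero (∑ i ∈ range _, _),
    ← sum_range_succ' (fun i => i), sum_range_id_mul_two, Nat.add_sub_cancel, mul_comm]

lemma IsEffective.of_rowCount_eq_comp {Q Q' : Finset (Fin n × Fin m)} (hQ : IsEffective n m d Q)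
    (σ : Equiv.Perm (Fin n)) (h : ∀ i, rowCount Q' i = rowCount Q (σ i)) :
    IsEffective n m d Q' := by
  obtain ⟨q, hq, hcard, hrows⟩ := hQ
  refine ⟨σ.symm ∘ q, σ.symm.injective.comp hq, fun ν => ?_, fun p hp => ?_⟩
  · have := h (σ.symm (q ν))
    rw [Equiv.apply_symm_apply] at this
    exact this.trans (hcard ν)
  · have hpos : 0 < rowCount Q (σ p.1) := h p.1 ▸ card_pos.2 ⟨p, mem_filter.2 ⟨hp, rfl⟩⟩
    obtain ⟨x, hx⟩ := card_pos.1 hpos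
    obtain ⟨ν, hν⟩ := hrows x (mem_filter.1 hx).1
    exact ⟨ν, by simp [← hν, (mem_filter.1 hx).2]⟩

/-- A point `p ∈ C \ Q` either lies in a row of `Q`, and replaces a point of that row, or lies in
a fresh row, and replaces the single point of the row of `Q` with one point. -/
lemma IsEffective.exists_ne_of_not_subset {C Q : Finset (Fin n × Fin m)}
    (hQ : IsEffective n m d Q) (hQC : Q ⊆ C) (hCQ : ¬ C ⊆ Q) :
    ∃ Q' ⊆ C, Q' ≠ Q ∧ IsEffective n m d Q' := by
  obtain ⟨p, hpC, hpQ⟩ := not_subset.1 hCQ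
  obtain ⟨x, hxQ, hx⟩ : ∃ x ∈ Q, x.1 ≠ p.1 → rowCount Q x.1 = rowCount Q p.1 + 1 := by
    obtain ⟨q, -, hcard, hrows⟩ := hQ
    have hrow_pos : ∀ ν, 0 < rowCount Q (q ν) := fun ν => by
      unfold rowCount
      rw [hcard ν]
      exact ν.1.succ_pos
    by_cases hp : ∃ ν, p.1 = q ν
    · obtain ⟨ν, hν⟩ := hp
      obtain ⟨x, hx⟩ := card_pos.1 (hrow_pos ν)
      exact ⟨x, (mem_filter.1 hx).1, fun hne => absurd ((mem_filter.1 hx).2.trans hν.symm) hne⟩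
    · obtain ⟨x, hx⟩ := card_pos.1 (hrow_pos 0)
      have hempty : rowCount Q p.1 = 0 :=
        card_eq_zero.2 <| filter_eq_empty_iff.2 fun y hy hyp => hp (hyp ▸ hrows y hy)
      refine ⟨x, (mem_filter.1 hx).1, fun _ => ?_⟩
      rw [hempty, (mem_filter.1 hx).2]
      exact hcard 0
  exact ⟨insert p (Q.erase x), insert_subset hpC ((erase_subset _ _).trans hQC),
    fun h => hpQ (h ▸ mem_insert_self _ _),
    hQ.of_rowCount_eq_comp _ (rowCount_insert_erase hpQ hxQ hx)⟩

end Grid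

/-- Suppose `m ≥ d+2` or `n ≥ d+2`. Any subset `C` of the `n × m` grid
with `|C| > max { f(k) : 1 ≤ k ≤ d+1 }` (which, after permuting rows and entries
within rows, may be arranged as a tableau) contains at least two distinct
effective sets. -/
theorem stmt_15 (n m d : ℕ) (hd : 1 ≤ d) (h : d + 2 ≤ m ∨ d + 2 ≤ n)
    (C : Finset (Fin n × Fin m)) (hC : maxF n m d < (C.card : ℤ)) :
    ∃ Q₁ Q₂ : Finset (Fin n × Fin m), Q₁ ⊆ C ∧ Q₂ ⊆ C ∧ Q₁ ≠ Q₂ ∧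
      IsEffective n m d Q₁ ∧ IsEffective n m d Q₂ := by
  obtain ⟨hnd, hmd⟩ := mul_lt_card_of_maxF_lt hC
  have hm : d ≤ m := by
    have : #C ≤ n * m := by simpa using card_le_univ C
    by_contra!
    nlinarith
  obtain ⟨q, hq, hqC⟩ := exists_injective_lt_of_le_card_filter (d + 1) (rowCount C)
    fun ν hν => le_card_rowCount_gt hm hC (by omega)
  obtain ⟨Q, hQC, hQ⟩ := exists_isEffective_subset hq hqC
  have hQlt : #Q < #C := by
    have := hQ.card_mul_two
    rcases h with h | h <;> nlinarith
  obtain ⟨Q', hQ'C, hne, hQ'⟩ :=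
    hQ.exists_ne_of_not_subset hQC fun hCQ => (card_le_card hCQ).not_gt hQlt
  exact ⟨Q, Q', hQC, hQ'C, hne.symm, hQ, hQ'⟩
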